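/- There exists a constant c > 0 such that for all nonzero vectors a, b, c in ℝ² with c = a + b and |a| ≤ min(|b|, |c|), one has Λ(a) + Λ(b) - Λ(c) ≥ c·[ |a|·(1 - (c·a)/(|c||a|) + 1 - (c·b)/(|c||b|)) + (|b||c|/(1+|b||c|))·(|a|/(1+|a|²)) ], where Λ(v) = |v|·√((2+|v|²)/(1+|v|²)). -/

import Mathlib

/-!
Write `Λ(v) = λ(|v|)` with `λ(r) = r p(r)`, where the phase speed `p(r) = √(1 + 1/(1 + r²))`
lies in `[1, √2]` and decreases in `r`. With `α = |a|`, `β = |b|`, `γ = |c|`, split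
`Λ(a) + Λ(b) - Λ(c) = [λ(α) + λ(β) - λ(α + β)] + [λ(α + β) - λ(γ)]`.

The second bracket is at least `(α + β - γ)/2`, since `λ(s)² - s²` increases and `λ(r) ≤ 2r`;
and `α + β - γ` dominates the angular term, because `α cos∠(c,a) + β cos∠(c,b) = γ`.

The first bracket is `α (p(α) - p(α+β)) + β (p(β) - p(α+β)) ≥ α (p(α) - p(α+β))`, and
`p(α)² - p(α+β)² = 1/(1+α²) - 1/(1+(α+β)²)` makes this of size
`α/(1+α²) · β(2α+β)/(1+(α+β)²) ≳ α/(1+α²) · βγ/(1+βγ)`.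
-/

noncomputable def Lam (v : EuclideanSpace ℝ (Fin 2)) : ℝ :=
  ‖v‖ * Real.sqrt ((2 + ‖v‖ ^ 2) / (1 + ‖v‖ ^ 2))

noncomputable def phaseSpeed (r : ℝ) : ℝ :=
  √((2 + r ^ 2) / (1 + r ^ 2))

noncomputable def lam (r : ℝ) : ℝ :=
  r * phaseSpeed r

lemma Lam_eq_lam_norm (v : EuclideanSpace ℝ (Fin 2)) : Lam v = lam ‖v‖ :=
  rfl

lemma phaseSpeed_sq (r : ℝ) : phaseSpeed r ^ 2 = 1 + 1 / (1 + r ^ 2) := by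
  rw [phaseSpeed, Real.sq_sqrt (by positivity)]
  field_simp
  ring

lemma one_le_phaseSpeed (r : ℝ) : 1 ≤ phaseSpeed r := by
  rw [phaseSpeed, Real.one_le_sqrt, one_le_div (by positivity)]
  linarith

lemma phaseSpeed_le_sqrt_two (r : ℝ) : phaseSpeed r ≤ √2 := by
  refine Real.sqrt_le_sqrt ?_
  rw [div_le_iff₀ (by positivity)]
  nlinarith [sq_nonneg r]

lemma phaseSpeed_sub_phaseSpeed_ge {s t : ℝ} (hst : s ^ 2 ≤ t ^ 2) :
    (t ^ 2 - s ^ 2) / (3 * ((1 + s ^ 2) * (1 + t ^ 2))) ≤ phaseSpeed s - phaseSpeed t := by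
  have hsq : (phaseSpeed s - phaseSpeed t) * (phaseSpeed s + phaseSpeed t) =
      (t ^ 2 - s ^ 2) / ((1 + s ^ 2) * (1 + t ^ 2)) := by
    rw [mul_comm, ← sq_sub_sq, phaseSpeed_sq, phaseSpeed_sq]
    field_simp
    ring
  have hsum : phaseSpeed s + phaseSpeed t ≤ 3 := by
    linarith [phaseSpeed_le_sqrt_two s, phaseSpeed_le_sqrt_two t, Real.sqrt_two_lt_three_halves]
  have hpos : 0 < phaseSpeed s + phaseSpeed t := by
    linarith [one_le_phaseSpeed s, one_le_phaseSpeed t]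
  have hD : 0 ≤ (t ^ 2 - s ^ 2) / ((1 + s ^ 2) * (1 + t ^ 2)) :=
    div_nonneg (by linarith) (by positivity)
  rw [mul_comm 3, ← div_div, div_le_iff₀ (by norm_num : (0 : ℝ) < 3)]
  nlinarith

lemma phaseSpeed_anti {s t : ℝ} (hst : s ^ 2 ≤ t ^ 2) : phaseSpeed t ≤ phaseSpeed s := by
  have hgap := phaseSpeed_sub_phaseSpeed_ge hst
  have hgap_nonneg : 0 ≤ (t ^ 2 - s ^ 2) / (3 * ((1 + s ^ 2) * (1 + t ^ 2))) :=
    div_nonneg (by linarith) (by positivity)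
  linarith

lemma half_sub_le_lam_sub_lam {s t : ℝ} (ht : 0 ≤ t) (hts : t ≤ s) :
    (s - t) / 2 ≤ lam s - lam t := by
  unfold lam
  have hs : 0 ≤ s := ht.trans hts
  have hsq : s ^ 2 - t ^ 2 ≤ (s * phaseSpeed s) ^ 2 - (t * phaseSpeed t) ^ 2 := by
    have hfrac : t ^ 2 / (1 + t ^ 2) ≤ s ^ 2 / (1 + s ^ 2) := by
      rw [div_le_div_iff₀ (by positivity) (by positivity)]
      nlinarith [pow_le_pow_left₀ ht hts 2]
    rw [mul_pow, mul_pow, phaseSpeed_sq, phaseSpeed_sq]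
    field_simp at hfrac ⊢
    nlinarith
  have hupper : s * phaseSpeed s + t * phaseSpeed t ≤ 2 * (s + t) := by
    nlinarith [phaseSpeed_le_sqrt_two s, phaseSpeed_le_sqrt_two t, Real.sqrt_two_lt_three_halves]
  have hlower : s + t ≤ s * phaseSpeed s + t * phaseSpeed t := by
    nlinarith [one_le_phaseSpeed s, one_le_phaseSpeed t]
  rcases hs.eq_or_lt with rfl | hs_pos
  · obtain rfl : t = 0 := le_antisymm hts ht
    simp
  nlinarith [mul_le_mul_of_nonneg_left hupper (by linarith : (0 : ℝ) ≤ s - t)]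

lemma le_lam_add_lam_sub_lam_add {α β : ℝ} (hα : 0 ≤ α) (hβ : 0 ≤ β) :
    α * ((α + β) ^ 2 - α ^ 2) / (3 * ((1 + α ^ 2) * (1 + (α + β) ^ 2))) ≤
      lam α + lam β - lam (α + β) := by
  have hsplit : lam α + lam β - lam (α + β) =
      α * (phaseSpeed α - phaseSpeed (α + β)) + β * (phaseSpeed β - phaseSpeed (α + β)) := by
    unfold lam; ring
  have hα_sq : α ^ 2 ≤ (α + β) ^ 2 := pow_le_pow_left₀ hα (by linarith) 2
  have hβ_sq : β ^ 2 ≤ (α + β) ^ 2 := pow_le_pow_left₀ hβ (by linarith) 2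
  have hα_gap := mul_le_mul_of_nonneg_left (phaseSpeed_sub_phaseSpeed_ge hα_sq) hα
  have hβ_gap := mul_nonneg hβ (sub_nonneg.mpr (phaseSpeed_anti hβ_sq))
  rw [hsplit, mul_div_assoc]
  linarith

lemma lam_add_lam_sub_lam_add_ge {α β γ : ℝ} (hα : 0 ≤ α) (hαβ : α ≤ β) (hγ : 0 ≤ γ)
    (hγαβ : γ ≤ α + β) :
    β * γ / (1 + β * γ) * (α / (1 + α ^ 2)) / 12 ≤ lam α + lam β - lam (α + β) := by
  have hβ : 0 ≤ β := hα.trans hαβ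
  have hratio : β * γ / (1 + β * γ) ≤ 4 * (((α + β) ^ 2 - α ^ 2) / (1 + (α + β) ^ 2)) := by
    rw [mul_div_assoc', div_le_div_iff₀ (by positivity) (by positivity)]
    have hγ_le : β * γ ≤ (α + β) ^ 2 - α ^ 2 := by nlinarith [mul_le_mul_of_nonneg_left hγαβ hβ]
    have hsq_le : (α + β) ^ 2 ≤ 4 * ((α + β) ^ 2 - α ^ 2) := by nlinarith
    nlinarith [mul_le_mul_of_nonneg_left hsq_le (mul_nonneg hβ hγ)]
  calc β * γ / (1 + β * γ) * (α / (1 + α ^ 2)) / 12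
      ≤ 4 * (((α + β) ^ 2 - α ^ 2) / (1 + (α + β) ^ 2)) * (α / (1 + α ^ 2)) / 12 := by
        gcongr
    _ = α * ((α + β) ^ 2 - α ^ 2) / (3 * ((1 + α ^ 2) * (1 + (α + β) ^ 2))) := by
        field_simp
        ring
    _ ≤ lam α + lam β - lam (α + β) := le_lam_add_lam_sub_lam_add hα hβ

lemma norm_mul_angle_defect_le {E : Type*} [NormedAddCommGroup E] [InnerProductSpace ℝ E]
    {a b : E} (ha : a ≠ 0) (hab : ‖a‖ ≤ ‖b‖) (hc : a + b ≠ 0) :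
    ‖a‖ * (1 - inner ℝ (a + b) a / (‖a + b‖ * ‖a‖) +
        (1 - inner ℝ (a + b) b / (‖a + b‖ * ‖b‖))) ≤ ‖a‖ + ‖b‖ - ‖a + b‖ := by
  have hα : 0 < ‖a‖ := norm_pos_iff.mpr ha
  have hβ : 0 < ‖b‖ := hα.trans_le hab
  have hγ : 0 < ‖a + b‖ := norm_pos_iff.mpr hc
  have hproj : inner ℝ (a + b) a / ‖a + b‖ + inner ℝ (a + b) b / ‖a + b‖ = ‖a + b‖ := by
    rw [← add_div, ← inner_add_right, real_inner_self_eq_norm_sq]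
    field_simp
  have hcos_le : inner ℝ (a + b) b / (‖a + b‖ * ‖b‖) ≤ 1 :=
    (abs_le.mp (abs_real_inner_div_norm_mul_norm_le_one _ _)).2
  have hα_term : ‖a‖ * (1 - inner ℝ (a + b) a / (‖a + b‖ * ‖a‖)) =
      ‖a‖ - inner ℝ (a + b) a / ‖a + b‖ := by
    field_simp
  have hβ_term : ‖b‖ * (1 - inner ℝ (a + b) b / (‖a + b‖ * ‖b‖)) =
      ‖b‖ - inner ℝ (a + b) b / ‖a + b‖ := by
    field_simp
  have hmono := mul_le_mul_of_nonneg_right hab (sub_nonneg.mpr hcos_le)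
  rw [mul_add, hα_term]
  linarith

theorem stmt_7 : ∃ c : ℝ, 0 < c ∧
    ∀ a b cv : EuclideanSpace ℝ (Fin 2), a ≠ 0 → b ≠ 0 → cv ≠ 0 →
      cv = a + b → ‖a‖ ≤ min ‖b‖ ‖cv‖ →
      Lam a + Lam b - Lam cv ≥
        c * (‖a‖ * (1 - (inner ℝ cv a : ℝ) / (‖cv‖ * ‖a‖) +
              (1 - (inner ℝ cv b : ℝ) / (‖cv‖ * ‖b‖))) +
          ‖b‖ * ‖cv‖ / (1 + ‖b‖ * ‖cv‖) * (‖a‖ / (1 + ‖a‖ ^ 2))) := by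
  refine ⟨1 / 12, by norm_num, ?_⟩
  rintro a b cv ha - hcv rfl hmin
  have hab : ‖a‖ ≤ ‖b‖ := hmin.trans (min_le_left _ _)
  have htri : ‖a + b‖ ≤ ‖a‖ + ‖b‖ := norm_add_le a b
  have hangle := norm_mul_angle_defect_le ha hab hcv
  have hgap := lam_add_lam_sub_lam_add_ge (norm_nonneg a) hab (norm_nonneg (a + b)) htri
  have hmono := half_sub_le_lam_sub_lam (norm_nonneg (a + b)) htri
  rw [Lam_eq_lam_norm, Lam_eq_lam_norm, Lam_eq_lam_norm]
  linarith
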